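/- (i) The family (w(a_v))_{v ∈ B} is a ℤ-basis of ℤ^B. (ii) Let a ∈ 𝒟 and let (c_v)_{v ∈ B} be the unique integers with w(a) = ∑_{v ∈ B} c_v · w(a_v). Then for every nonempty partition λ ∈ 𝒫(n,r): if a is not the in-arrow, then ∑_{v ∈ B} χ_λ(v)·c_v equals 1 if λ crosses a and equals 0 otherwise; and if a is the in-arrow, then ∑_{v ∈ B} χ_λ(v)·c_v = −1. (This is the duality pairing ⟨m_λ, w_a⟩ between the vertices of the divisor polytope P_{D_∅} and the vertices of P_{n,r}.) -/

import Mathlib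

open scoped Classical

/-- `lam : ℕ → ℕ` is a partition in the `r × (n-r)` box, with the conventions
`lam 0 = n - r` and `lam t = 0` for `t > r` built in. -/
def IsPartition (n r : ℕ) (lam : ℕ → ℕ) : Prop :=
  lam 0 = n - r ∧ (∀ t, r < t → lam t = 0) ∧ ∀ t, lam (t + 1) ≤ lam t

/-- The edge set `E(λ)` of the monotone lattice path of the partition `λ`. -/
def pathEdges (r : ℕ) (lam : ℕ → ℕ) : Set ((ℕ × ℕ) × Bool) :=
  {e | (∃ t, 1 ≤ t ∧ t ≤ r ∧ e = ((lam t, r - t), true)) ∨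
       (∃ t x, t ≤ r ∧ lam (t + 1) ≤ x ∧ x + 1 ≤ lam t ∧ e = ((x, r - t), false))}

/-- `χ_λ ∈ ℤ^B`: box `(t,j)` corresponds to the index `(t-1, j-1) : Fin r × Fin (n-r)`. -/
def chi (n r : ℕ) (lam : ℕ → ℕ) : Fin r × Fin (n - r) → ℤ := fun p =>
  if lam (p.1.1 + 1) = p.2.1 + 1 ∧ (p.2.1 + 1 < n - r ∨ lam (p.1.1 + 2) < n - r) then 1 else 0

/-- `e_{(t,j)} ∈ ℤ^B` (1-indexed box coordinates). -/
def basisVec (n r : ℕ) (t j : ℕ) : Fin r × Fin (n - r) → ℤ := fun p =>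
  if p.1.1 + 1 = t ∧ p.2.1 + 1 = j then 1 else 0

/-- The vector `w(a_v)` for the distinguished dual arrow `a_v` assigned to the box
`v = (t,j)`: the horizontal arrow `(t,j) → (t,j+1)` if `j < k`; the out-arrow if
`(t,j) = (r,k)`; the vertical arrow `(t,k) → (t+1,k)` if `j = k` and `t < r`. -/
def wA (n r : ℕ) (v : Fin r × Fin (n - r)) : Fin r × Fin (n - r) → ℤ :=
  if v.2.1 + 1 < n - r then
    basisVec n r (v.1.1 + 1) (v.2.1 + 2) - basisVec n r (v.1.1 + 1) (v.2.1 + 1)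
  else if v.1.1 + 1 < r then
    basisVec n r (v.1.1 + 2) (v.2.1 + 1) - basisVec n r (v.1.1 + 1) (v.2.1 + 1)
  else
    -basisVec n r r (n - r)

/-- The arrows of the dual quiver. -/
inductive DArrow where
  | horiz (t j : ℕ)
  | vert (t j : ℕ)
  | inAr
  | outAr
deriving DecidableEq

/-- The index constraints making a `DArrow` an actual arrow of the dual quiver of the
ladder diagram of `Gr(n,r)`. -/
def DArrow.valid (n r : ℕ) : DArrow → Prop
  | .horiz t j => 1 ≤ t ∧ t ≤ r ∧ 1 ≤ j ∧ j + 1 ≤ n - r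
  | .vert t j => 1 ≤ t ∧ t + 1 ≤ r ∧ 1 ≤ j ∧ j ≤ n - r
  | .inAr => True
  | .outAr => True

/-- The vector `w(a) ∈ ℤ^B` attached to a dual arrow `a`. -/
def DArrow.w (n r : ℕ) : DArrow → (Fin r × Fin (n - r) → ℤ)
  | .horiz t j => basisVec n r t (j + 1) - basisVec n r t j
  | .vert t j => basisVec n r (t + 1) j - basisVec n r t j
  | .inAr => basisVec n r 1 1
  | .outAr => -basisVec n r r (n - r)

/-- The unique grid edge crossed by a dual arrow. -/
def DArrow.crossEdge (n r : ℕ) : DArrow → ((ℕ × ℕ) × Bool)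
  | .horiz t j => ((j, r - t), true)
  | .vert t j => ((j - 1, r - t), false)
  | .inAr => ((0, r), false)
  | .outAr => ((n - r, 0), true)

/-!
For a box `u`, the arrows `a_v` lead from `u` along its row to the last column and then down to
the out-arrow; summing `w(a_v)` over this hook path telescopes to `-e_u`. Hence
`c ↦ ∑ c_v w(a_v)` is onto, so bijective, and the coefficients of `w(a) = e_y - e_x` are
`hook(x) - hook(y)`. Pairing `χ_λ` with `hook(t, j)` gives `1` if `(t, j)` lies in the Young
diagram of `λ` and `0` otherwise, so the pairing with `w(a)` is `[x ∈ λ] - [y ∈ λ]`, which is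
exactly whether the path of `λ` separates `x` from `y`.
-/

namespace DualPairing

variable {n r : ℕ}

/-- Indicator of the path from box `(t, j)` (1-indexed, as in `basisVec`) to the out-arrow
along the arrows `a_v`. -/
def hookPath (n r t j : ℕ) : Fin r × Fin (n - r) → ℤ := fun v =>
  if (v.1.1 + 1 = t ∧ j ≤ v.2.1 + 1) ∨ (t < v.1.1 + 1 ∧ v.2.1 + 1 = n - r) then 1 else 0

def rowTail (n r t j : ℕ) : Fin r × Fin (n - r) → ℤ := fun v =>
  if v.1.1 + 1 = t ∧ j ≤ v.2.1 + 1 then 1 else 0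

variable (n r) in
abbrev wMap : (Fin r × Fin (n - r) → ℤ) →ₗ[ℤ] (Fin r × Fin (n - r) → ℤ) :=
  Fintype.linearCombination ℤ (wA n r)

lemma basisVec_eq_single (u : Fin r × Fin (n - r)) :
    basisVec n r (u.1.1 + 1) (u.2.1 + 1) = Pi.single u 1 := by
  funext v
  simp only [basisVec, Pi.single_apply, Prod.ext_iff, Fin.ext_iff, add_left_inj, eq_comm]

lemma wMap_basisVec (u : Fin r × Fin (n - r)) :
    wMap n r (basisVec n r (u.1.1 + 1) (u.2.1 + 1)) = wA n r u := by
  rw [basisVec_eq_single, Fintype.linearCombination_apply_single, one_smul]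

lemma hookPath_eq_basisVec_add {i l : ℕ} (hi : i < r) (hl : l < n - r) :
    hookPath n r (i + 1) (l + 1) = basisVec n r (i + 1) (l + 1) +
      if l + 1 < n - r then hookPath n r (i + 1) (l + 2)
      else if i + 1 < r then hookPath n r (i + 2) (l + 1) else 0 := by
  split_ifs <;> funext v <;>
    simp only [hookPath, basisVec, Pi.add_apply, Pi.zero_apply] <;> split_ifs <;> omega

/-- Along the hook the vectors `w(a_v)` telescope. -/
theorem wMap_hookPath (i l : ℕ) (hi : i < r) (hl : l < n - r) :
    wMap n r (hookPath n r (i + 1) (l + 1)) = -basisVec n r (i + 1) (l + 1) := by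
  rw [hookPath_eq_basisVec_add hi hl, map_add,
    wMap_basisVec (⟨i, hi⟩, ⟨l, hl⟩)]
  simp only [wA]
  split_ifs with h₁ h₂
  · rw [wMap_hookPath i (l + 1) hi h₁]; abel
  · rw [wMap_hookPath (i + 1) l h₂ hl]; abel
  · have hi' : i + 1 = r := by omega
    have hl' : l + 1 = n - r := by omega
    rw [map_zero, hi', hl', add_zero]
termination_by (r - i) + (n - r - l)

lemma wMap_surjective : Function.Surjective (wMap n r) := by
  intro x
  refine ⟨-∑ u, x u • hookPath n r (u.1.1 + 1) (u.2.1 + 1), ?_⟩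
  simp only [map_neg, map_sum, map_smul, wMap_hookPath _ _ (Fin.is_lt _) (Fin.is_lt _),
    smul_neg, Finset.sum_neg_distrib, neg_neg, basisVec_eq_single, ← Pi.single_smul',
    smul_eq_mul, mul_one]
  exact Finset.univ_sum_single x

lemma wMap_bijective : Function.Bijective (wMap n r) :=
  OrzechProperty.bijective_of_surjective_endomorphism _ wMap_surjective

variable (n r) in
noncomputable def wBasis : Module.Basis (Fin r × Fin (n - r)) ℤ (Fin r × Fin (n - r) → ℤ) :=
  (Pi.basisFun ℤ _).map (LinearEquiv.ofBijective (wMap n r) wMap_bijective)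

lemma wBasis_apply (v : Fin r × Fin (n - r)) : wBasis n r v = wA n r v := by
  rw [wBasis, Module.Basis.map_apply, Pi.basisFun_apply, LinearEquiv.ofBijective_apply,
    Fintype.linearCombination_apply_single, one_smul]

def _root_.DArrow.coeff (n r : ℕ) : DArrow → (Fin r × Fin (n - r) → ℤ)
  | .horiz t j => hookPath n r t j - hookPath n r t (j + 1)
  | .vert t j => hookPath n r t j - hookPath n r (t + 1) j
  | .inAr => -hookPath n r 1 1
  | .outAr => hookPath n r r (n - r)

lemma wMap_coeff {a : DArrow} (ha : a.valid n r) (hr : 1 ≤ r) (hk : 1 ≤ n - r) :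
    wMap n r (a.coeff n r) = a.w n r := by
  cases a with
  | horiz t j =>
    obtain ⟨ht, htr, hj, hjk⟩ := ha
    obtain ⟨i, rfl⟩ := Nat.exists_eq_add_of_le' ht
    obtain ⟨l, rfl⟩ := Nat.exists_eq_add_of_le' hj
    rw [DArrow.coeff, DArrow.w, map_sub, wMap_hookPath i l htr (Nat.lt_of_succ_lt hjk),
      wMap_hookPath i (l + 1) htr hjk, neg_sub_neg]
  | vert t j =>
    obtain ⟨ht, htr, hj, hjk⟩ := ha
    obtain ⟨i, rfl⟩ := Nat.exists_eq_add_of_le' ht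
    obtain ⟨l, rfl⟩ := Nat.exists_eq_add_of_le' hj
    rw [DArrow.coeff, DArrow.w, map_sub, wMap_hookPath i l (Nat.lt_of_succ_lt htr) hjk,
      wMap_hookPath (i + 1) l htr hjk, neg_sub_neg]
  | inAr =>
    rw [DArrow.coeff, DArrow.w, map_neg, wMap_hookPath 0 0 hr hk, neg_neg]
  | outAr =>
    have h := wMap_hookPath (n := n) (r := r) (r - 1) (n - r - 1) (by omega) (by omega)
    rwa [Nat.sub_add_cancel hr, Nat.sub_add_cancel hk] at h

lemma _root_.IsPartition.le {lam : ℕ → ℕ} (hlam : IsPartition n r lam) (t : ℕ) :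
    lam t ≤ n - r :=
  hlam.1 ▸ antitone_nat_of_succ_le hlam.2.2 (Nat.zero_le t)

lemma chi_dotProduct_rowTail {lam : ℕ → ℕ} {t j : ℕ} (ht : 1 ≤ t) (htr : t ≤ r) (hj : 1 ≤ j)
    (hle : lam t ≤ n - r) :
    chi n r lam ⬝ᵥ rowTail n r t j =
      if j ≤ lam t ∧ (lam t < n - r ∨ lam (t + 1) < n - r) then 1 else 0 := by
  obtain ⟨i, rfl⟩ := Nat.exists_eq_add_of_le' ht
  rw [show i + 1 + 1 = i + 2 from rfl]
  split_ifs with h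
  · rw [dotProduct, Finset.sum_eq_single (⟨i, htr⟩, ⟨lam (i + 1) - 1, by omega⟩)]
    · simp only [chi, rowTail]
      rw [if_pos ⟨by omega, by omega⟩, if_pos ⟨trivial, by omega⟩, mul_one]
    · rintro ⟨⟨i', hi'⟩, ⟨l, hl⟩⟩ - hne
      simp only [chi, rowTail]
      split_ifs with h₁ h₂
      · obtain rfl : i' = i := by omega
        exact (hne (Prod.ext rfl (Fin.ext (by dsimp only; omega)))).elim
      all_goals simp
    · simp
  · refine Finset.sum_eq_zero fun ⟨⟨i', hi'⟩, ⟨l, hl⟩⟩ _ => ?_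
    simp only [chi, rowTail]
    split_ifs with h₁ h₂
    · obtain rfl : i' = i := by omega
      omega
    all_goals simp

lemma hookPath_eq_rowTail_add (t j : ℕ) :
    hookPath n r t j = rowTail n r t j + hookPath n r (t + 1) (n - r) := by
  funext v
  simp only [hookPath, rowTail, Pi.add_apply]
  split_ifs <;> omega

lemma hookPath_last_row (j : ℕ) : hookPath n r r j = rowTail n r r j := by
  funext v
  have := v.1.2
  simp only [hookPath, rowTail]
  split_ifs <;> omega

/-- The hook meets the support of `χ_λ` in the last box of row `t`, unless rows `t` and `t + 1`
are both full, and then in the last column at the bottom of the block of full rows below `t`. -/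
theorem chi_dotProduct_hookPath {lam : ℕ → ℕ} (hlam : IsPartition n r lam) {t j : ℕ}
    (ht : 1 ≤ t) (htr : t ≤ r) (hj : 1 ≤ j) (hjk : j ≤ n - r) :
    chi n r lam ⬝ᵥ hookPath n r t j = if j ≤ lam t then 1 else 0 := by
  have hmono := hlam.2.2 t
  have hle := hlam.le t
  by_cases hlt : t < r
  · have hnext := chi_dotProduct_hookPath hlam (t := t + 1) (by omega) hlt (by omega) le_rfl
    rw [hookPath_eq_rowTail_add t j, dotProduct_add, chi_dotProduct_rowTail ht htr hj hle,
      hnext]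
    split_ifs <;> omega
  · obtain rfl : t = r := by omega
    rw [hookPath_last_row, chi_dotProduct_rowTail ht le_rfl hj hle, hlam.2.1 (t + 1) (by omega)]
    split_ifs <;> omega
termination_by r - t

lemma mem_pathEdges_vertical {lam : ℕ → ℕ} {t x : ℕ} (ht : 1 ≤ t) (htr : t ≤ r) :
    ((x, r - t), true) ∈ pathEdges r lam ↔ lam t = x := by
  simp only [pathEdges, Set.mem_ofPred_eq, Prod.mk.injEq, Bool.true_eq_false, and_false,
    exists_false, or_false, and_true]
  constructor
  · rintro ⟨s, hs, hsr, rfl, hst⟩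
    obtain rfl : s = t := by omega
    rfl
  · rintro rfl
    exact ⟨t, ht, htr, rfl, rfl⟩

lemma mem_pathEdges_horizontal {lam : ℕ → ℕ} {t x : ℕ} (htr : t ≤ r) :
    ((x, r - t), false) ∈ pathEdges r lam ↔ lam (t + 1) ≤ x ∧ x + 1 ≤ lam t := by
  simp only [pathEdges, Set.mem_ofPred_eq, Prod.mk.injEq, Bool.false_eq_true, and_false,
    exists_false, false_or, and_true]
  constructor
  · rintro ⟨s, y, hsr, hs₁, hs₂, rfl, hst⟩
    obtain rfl : s = t := by omega
    exact ⟨hs₁, hs₂⟩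
  · rintro ⟨hx₁, hx₂⟩
    exact ⟨t, x, htr, hx₁, hx₂, rfl, rfl⟩

theorem chi_dotProduct_coeff {a : DArrow} (ha : a.valid n r) (hne : a ≠ .inAr)
    (hr : 1 ≤ r) (hk : 1 ≤ n - r) {lam : ℕ → ℕ} (hlam : IsPartition n r lam) :
    chi n r lam ⬝ᵥ a.coeff n r = if a.crossEdge n r ∈ pathEdges r lam then 1 else 0 := by
  cases a with
  | horiz t j =>
    obtain ⟨ht, htr, hj, hjk⟩ := ha
    rw [DArrow.coeff, DArrow.crossEdge, dotProduct_sub,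
      chi_dotProduct_hookPath hlam ht htr hj (by omega),
      chi_dotProduct_hookPath hlam ht htr (by omega) hjk, mem_pathEdges_vertical ht htr]
    split_ifs <;> omega
  | vert t j =>
    obtain ⟨ht, htr, hj, hjk⟩ := ha
    have hmono := hlam.2.2 t
    rw [DArrow.coeff, DArrow.crossEdge, dotProduct_sub,
      chi_dotProduct_hookPath hlam ht (by omega) hj hjk,
      chi_dotProduct_hookPath hlam (by omega) htr hj hjk, mem_pathEdges_horizontal (by omega)]
    split_ifs <;> omega
  | inAr => exact absurd rfl hne
  | outAr =>
    have hle := hlam.le r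
    rw [DArrow.coeff, DArrow.crossEdge, chi_dotProduct_hookPath hlam hr le_rfl hk le_rfl,
      ← Nat.sub_self r, mem_pathEdges_vertical hr le_rfl]
    split_ifs <;> omega

end DualPairing

open DualPairing in
/-- (i) the family `(w(a_v))_{v ∈ B}` is a `ℤ`-basis of `ℤ^B`; (ii) if
`w(a) = ∑_v c_v·w(a_v)`, then for every nonempty partition `λ`, the pairing
`∑_v χ_λ(v)·c_v` equals `1` or `0` according to whether `λ` crosses `a` (when `a` is not
the in-arrow), and equals `-1` when `a` is the in-arrow. -/
theorem dual_pairing (n r : ℕ) (hr : 1 ≤ r) (hrn : r < n) :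
    (∃ b : Module.Basis (Fin r × Fin (n - r)) ℤ (Fin r × Fin (n - r) → ℤ), ∀ v, b v = wA n r v) ∧
    (∀ a : DArrow, a.valid n r →
      ∀ c : Fin r × Fin (n - r) → ℤ,
        DArrow.w n r a = ∑ v, c v • wA n r v →
        ∀ lam : ℕ → ℕ, IsPartition n r lam → (∃ t, 1 ≤ t ∧ t ≤ r ∧ 1 ≤ lam t) →
          (a ≠ DArrow.inAr →
            (∑ v, chi n r lam v * c v) =
              (if DArrow.crossEdge n r a ∈ pathEdges r lam then 1 else 0)) ∧
          (a = DArrow.inAr → (∑ v, chi n r lam v * c v) = -1)) := by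
  have hk : 1 ≤ n - r := by omega
  refine ⟨⟨wBasis n r, wBasis_apply⟩, fun a ha c hc lam hlam hne => ?_⟩
  obtain rfl : c = a.coeff n r :=
    wMap_bijective.injective (by rw [wMap_coeff ha hr hk, hc]; rfl)
  refine ⟨fun hin => chi_dotProduct_coeff ha hin hr hk hlam, ?_⟩
  rintro rfl
  obtain ⟨t, ht, -, hlt⟩ := hne
  have hlam₁ : 1 ≤ lam 1 := hlt.trans (antitone_nat_of_succ_le hlam.2.2 ht)
  change chi n r lam ⬝ᵥ -hookPath n r 1 1 = -1
  rw [dotProduct_neg, chi_dotProduct_hookPath hlam le_rfl hr le_rfl hk, if_pos hlam₁]
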